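/- arXiv:2111.05693 — 2 statements merged into one kernel-verified Lean document; each statement's English description precedes it below -/
import Mathlib

section
/- Let ω₁, ω₂ be majorants, let i, j be orthogonal imaginary units, and let f be a slice regular function on D⁴ with ℂ(i)-components f₁, f₂ on D_i. Suppose there are constants C₁, C₂ > 0 such that ‖f_k(x) − f_k(y)‖ ≤ C_k·ω_k(‖x − y‖) for all x, y ∈ D_i and k = 1, 2. Then for all p, q ∈ D⁴ one has ‖f(p) − f(q)‖ ≤ 6·max(C₁, C₂)·(ω₁(‖p − q‖) + ω₂(‖p − q‖)). -/
/-!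
Everything rests on the representation formula
`f (x + y I) = ½ (1 - I i) f (x + y i) + ½ (1 + I i) f (x - y i)` for slice regular `f`.
On the slice `ℂ(i)` we have `f = f₁ + f₂ j` with `‖j‖ = 1`, so `f` has modulus
`M (ω₁ + ω₂)` there, `M = max C₁ C₂`, and this is again a majorant. Writing `p = x + y I` and
`q = x' + y' J` with `y, y' ≥ 0`, the representation formula gives
`f p - f q = ½ (1 - I i) (f z - f z') + ½ (1 + I i) (f z̄ - f z̄') - ½ (I - J) i (f z' - f z̄')`
with `z = x + y i`, `z' = x' + y' i`. The first two terms are at most the modulus at `‖p - q‖`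
because `|z - z'| ≤ ‖p - q‖`. In the last one, `‖I - J‖ y' ≤ 2 ‖p - q‖` and `ω (2 y') / (2 y')`
is decreasing, which bounds it by twice the modulus at `‖p - q‖`; in total `4 ≤ 6`.
-/

noncomputable section

notation "ℍ" => Quaternion ℝ

def IsImaginaryUnit (i : ℍ) : Prop := i.re = 0 ∧ ‖i‖ = 1

def OrthogonalUnits (i j : ℍ) : Prop :=
  IsImaginaryUnit i ∧ IsImaginaryUnit j ∧ (i * star j).re = 0

def qslice (i : ℍ) : Set ℍ := {z | ∃ x y : ℝ, z = (x : ℍ) + y • i}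

def sliceDisc (i : ℍ) : Set ℍ := {z ∈ qslice i | ‖z‖ < 1}

def sliceCircle (i : ℍ) : Set ℍ := {z ∈ qslice i | ‖z‖ = 1}

def unitBall : Set ℍ := {q : ℍ | ‖q‖ < 1}

structure IsMajorant (ω : ℝ → ℝ) : Prop where
  contOn : ContinuousOn ω (Set.Icc 0 2)
  map_zero : ω 0 = 0
  nonneg : ∀ t ∈ Set.Icc (0:ℝ) 2, 0 ≤ ω t
  mono : MonotoneOn ω (Set.Icc 0 2)
  div_anti : AntitoneOn (fun t => ω t / t) (Set.Ioc 0 2)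

def IsRegularMajorant (ω : ℝ → ℝ) : Prop :=
  IsMajorant ω ∧ ∃ C > 0, ∀ x : ℝ, 0 < x → x < 2 →
    (∫ t in (0:ℝ)..x, ω t / t) + x * (∫ t in x..(2:ℝ), ω t / t ^ 2) ≤ C * ω x

def SliceRegularOn (f : ℍ → ℍ) (a : ℕ → ℍ) : Prop :=
  (∀ r : ℝ, 0 ≤ r → r < 1 → Summable (fun n => ‖a n‖ * r ^ n)) ∧
  (∀ q ∈ unitBall, HasSum (fun n => q ^ n * a n) (f q))

def IsSliceRegular (f : ℍ → ℍ) : Prop := ∃ a : ℕ → ℍ, SliceRegularOn f a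

def SliceDeriv (f f' : ℍ → ℍ) (a : ℕ → ℍ) : Prop :=
  SliceRegularOn f a ∧
  (∀ q ∈ unitBall, HasSum (fun n => ((n + 1 : ℕ) : ℝ) • (q ^ n * a (n + 1))) (f' q))

def expI (i : ℍ) (t : ℝ) : ℍ := (Real.cos t : ℍ) + Real.sin t • i

def poisson (i : ℍ) (u : ℍ → ℝ) (q : ℍ) : ℝ :=
  (1 / (2 * Real.pi)) * ∫ t in (0:ℝ)..(2 * Real.pi),
    u (expI i t) * (1 - ‖q‖ ^ 2) / ‖q - expI i t‖ ^ 2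

def comp1 (i : ℍ) (f : ℍ → ℍ) : ℍ → ℍ := fun q => (2⁻¹ : ℝ) • (f q - i * f q * i)

def comp2 (i j : ℍ) (f : ℍ → ℍ) : ℍ → ℍ := fun q => ((2⁻¹ : ℝ) • (f q + i * f q * i)) * j⁻¹

namespace IsMajorant

variable {ω : ℝ → ℝ}

theorem add {ω₁ ω₂ : ℝ → ℝ} (h₁ : IsMajorant ω₁) (h₂ : IsMajorant ω₂) :
    IsMajorant (fun t => ω₁ t + ω₂ t) where
  contOn := h₁.contOn.add h₂.contOn
  map_zero := by rw [h₁.map_zero, h₂.map_zero, add_zero]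
  nonneg t ht := add_nonneg (h₁.nonneg t ht) (h₂.nonneg t ht)
  mono := h₁.mono.add h₂.mono
  div_anti := by simpa only [add_div] using h₁.div_anti.add h₂.div_anti

theorem const_mul (h : IsMajorant ω) {c : ℝ} (hc : 0 ≤ c) : IsMajorant (fun t => c * ω t) where
  contOn := h.contOn.const_smul c
  map_zero := by rw [h.map_zero, mul_zero]
  nonneg t ht := mul_nonneg hc (h.nonneg t ht)
  mono _ hx _ hy hxy := mul_le_mul_of_nonneg_left (h.mono hx hy hxy) hc
  div_anti _ hx _ hy hxy := by
    simpa only [mul_div_assoc] using mul_le_mul_of_nonneg_left (h.div_anti hx hy hxy) hc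

theorem le_div_mul (h : IsMajorant ω) {s t : ℝ} (ht : 0 < t) (hts : t ≤ s) (hs : s ≤ 2) :
    ω s ≤ s / t * ω t := by
  have hanti := h.div_anti ⟨ht, hts.trans hs⟩ ⟨ht.trans_le hts, hs⟩ hts
  rw [div_le_div_iff₀ (ht.trans_le hts) ht] at hanti
  rw [div_mul_eq_mul_div, le_div_iff₀ ht]
  linarith

/-- For `s ≤ t` this is monotonicity of `ω`, for `t < s` the decrease of `ω t / t`. -/
theorem mul_le_mul_of_mul_le (h : IsMajorant ω) {c K s t : ℝ} (hc : 0 ≤ c) (hcK : c ≤ K)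
    (hs : 0 ≤ s) (hs2 : s ≤ 2) (ht : 0 < t) (ht2 : t ≤ 2) (hcs : c * s ≤ K * t) :
    c * ω s ≤ K * ω t := by
  have hωt : 0 ≤ ω t := h.nonneg t ⟨ht.le, ht2⟩
  rcases le_or_gt s t with hst | hts
  · calc c * ω s ≤ c * ω t := mul_le_mul_of_nonneg_left (h.mono ⟨hs, hs2⟩ ⟨ht.le, ht2⟩ hst) hc
      _ ≤ K * ω t := mul_le_mul_of_nonneg_right hcK hωt
  · calc c * ω s ≤ c * (s / t * ω t) := mul_le_mul_of_nonneg_left (h.le_div_mul ht hts.le hs2) hc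
      _ = c * s / t * ω t := by ring
      _ ≤ K * ω t := by
        gcongr
        rwa [div_le_iff₀ ht]

end IsMajorant

theorem norm_sub_mul_norm_le {E : Type*} [SeminormedAddCommGroup E] [NormedSpace ℝ E]
    {x y u v : E} (hu : ‖u‖ = 1) (hx : ‖x‖ • u = x) (hy : ‖y‖ • v = y) :
    ‖u - v‖ * ‖y‖ ≤ 2 * ‖x - y‖ := by
  have hsplit : ‖y‖ • (u - v) = (‖y‖ - ‖x‖) • u + (x - y) := by
    rw [smul_sub, hy, sub_smul, hx]; abel
  calc ‖u - v‖ * ‖y‖ = ‖(‖y‖ - ‖x‖) • u + (x - y)‖ := by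
        rw [← hsplit, norm_smul, norm_norm, mul_comm]
    _ ≤ |‖y‖ - ‖x‖| + ‖x - y‖ := by
        simpa only [norm_smul, hu, mul_one, Real.norm_eq_abs] using
          norm_add_le ((‖y‖ - ‖x‖) • u) (x - y)
    _ ≤ 2 * ‖x - y‖ := by
        linarith [abs_norm_sub_norm_le y x, norm_sub_rev x y]

theorem Quaternion.norm_sq_eq_re_sq_add_norm_im_sq (a : ℍ) :
    ‖a‖ ^ 2 = a.re ^ 2 + ‖a.im‖ ^ 2 := by
  simp only [sq, ← Quaternion.normSq_eq_norm_mul_self, Quaternion.normSq_def',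
    Quaternion.re_im, Quaternion.imI_im, Quaternion.imJ_im, Quaternion.imK_im]
  ring

theorem Quaternion.norm_im_le_norm (a : ℍ) : ‖a.im‖ ≤ ‖a‖ := by
  rw [← pow_le_pow_iff_left₀ (norm_nonneg _) (norm_nonneg _) two_ne_zero,
    Quaternion.norm_sq_eq_re_sq_add_norm_im_sq a]
  nlinarith [sq_nonneg a.re]

namespace IsImaginaryUnit

variable {I i : ℍ}

theorem im_eq_self (hI : IsImaginaryUnit I) : I.im = I := by
  rw [← Quaternion.sub_re_self, hI.1, Quaternion.coe_zero, sub_zero]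

theorem mul_self (hI : IsImaginaryUnit I) : I * I = -1 := by
  have h := Quaternion.self_mul_star I
  rwa [Quaternion.star_eq_neg.2 hI.1, mul_neg, Quaternion.normSq_eq_norm_mul_self, hI.2, mul_one,
    Quaternion.coe_one, neg_eq_iff_eq_neg] at h

def sliceAlgHom (hI : IsImaginaryUnit I) : ℂ →ₐ[ℝ] ℍ := Complex.liftAux I hI.mul_self

theorem sliceAlgHom_apply (hI : IsImaginaryUnit I) (z : ℂ) :
    hI.sliceAlgHom z = (z.re : ℍ) + z.im • I :=
  Complex.liftAux_apply I hI.mul_self z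

theorem norm_sliceAlgHom (hI : IsImaginaryUnit I) (z : ℂ) : ‖hI.sliceAlgHom z‖ = ‖z‖ := by
  rw [← sq_eq_sq₀ (norm_nonneg _) (norm_nonneg _), Quaternion.norm_sq_eq_re_sq_add_norm_im_sq,
    Complex.sq_norm, Complex.normSq_apply, sliceAlgHom_apply]
  simp [norm_smul, hI.1, hI.im_eq_self, hI.2, ← sq]

theorem sliceAlgHom_mem_sliceDisc (hI : IsImaginaryUnit I) {z : ℂ} (hz : ‖z‖ < 1) :
    hI.sliceAlgHom z ∈ sliceDisc I :=
  ⟨⟨z.re, z.im, hI.sliceAlgHom_apply z⟩, (hI.norm_sliceAlgHom z).trans_lt hz⟩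

theorem norm_sliceAlgHom_sub_conj (hI : IsImaginaryUnit I) (z : ℂ) :
    ‖hI.sliceAlgHom z - hI.sliceAlgHom (starRingEnd ℂ z)‖ = 2 * |z.im| := by
  rw [← map_sub, norm_sliceAlgHom, Complex.sub_conj, norm_mul, Complex.norm_I, mul_one,
    Complex.norm_real, Real.norm_eq_abs, abs_mul, abs_two]

end IsImaginaryUnit

theorem sliceDisc_subset_unitBall (I : ℍ) : sliceDisc I ⊆ unitBall := fun _ hz => hz.2

theorem norm_sub_mem_Icc_zero_two {p q : ℍ} (hp : p ∈ unitBall) (hq : q ∈ unitBall) :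
    ‖p - q‖ ∈ Set.Icc (0 : ℝ) 2 := by
  have hp' : ‖p‖ < 1 := hp
  have hq' : ‖q‖ < 1 := hq
  exact ⟨norm_nonneg _, by linarith [norm_sub_le p q]⟩

/-- The representation formula: the value at `x + y I` of a slice regular function whose values
at `x + y i` and `x - y i` are `u` and `v`. -/
def sliceRepr (I i u v : ℍ) : ℍ := (2⁻¹ : ℝ) • ((1 - I * i) * u + (1 + I * i) * v)

theorem sliceRepr_mul (I i u v w : ℍ) : sliceRepr I i u v * w = sliceRepr I i (u * w) (v * w) := by
  simp only [sliceRepr, smul_mul_assoc, add_mul, mul_assoc]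

theorem IsImaginaryUnit.sliceAlgHom_eq_sliceRepr {I i : ℍ} (hI : IsImaginaryUnit I)
    (hi : IsImaginaryUnit i) (z : ℂ) :
    hI.sliceAlgHom z = sliceRepr I i (hi.sliceAlgHom z) (hi.sliceAlgHom (starRingEnd ℂ z)) := by
  simp only [sliceRepr, sliceAlgHom_apply, Complex.conj_re, Complex.conj_im,
    mul_add, sub_mul, add_mul, mul_smul_comm, one_mul, mul_one,
    mul_assoc, hi.mul_self, mul_neg]
  module

theorem SliceRegularOn.apply_sliceAlgHom {f : ℍ → ℍ} {a : ℕ → ℍ} (hfa : SliceRegularOn f a)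
    {I i : ℍ} (hI : IsImaginaryUnit I) (hi : IsImaginaryUnit i) {z : ℂ} (hz : ‖z‖ < 1) :
    f (hI.sliceAlgHom z) =
      sliceRepr I i (f (hi.sliceAlgHom z)) (f (hi.sliceAlgHom (starRingEnd ℂ z))) := by
  have hasSum {J : ℍ} (hJ : IsImaginaryUnit J) {w : ℂ} (hw : ‖w‖ < 1) :=
    hfa.2 _ (sliceDisc_subset_unitBall J (hJ.sliceAlgHom_mem_sliceDisc hw))
  have hz' : ‖starRingEnd ℂ z‖ < 1 := by rwa [Complex.norm_conj]
  have hrepr : HasSum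
      (fun n => sliceRepr I i (hi.sliceAlgHom z ^ n * a n)
        (hi.sliceAlgHom (starRingEnd ℂ z) ^ n * a n))
      (sliceRepr I i (f (hi.sliceAlgHom z)) (f (hi.sliceAlgHom (starRingEnd ℂ z)))) :=
    (((hasSum hi hz).mul_left _).add ((hasSum hi hz').mul_left _)).const_smul (2⁻¹ : ℝ)
  refine (hasSum hI hz).unique ?_
  simp_rw [← map_pow, hI.sliceAlgHom_eq_sliceRepr hi, map_pow, sliceRepr_mul]
  exact hrepr

open Classical in
/-- The imaginary unit `I` with `p ∈ ℂ(I)`, normalised so that `p = x + y I` with `y ≥ 0`;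
for real `p` every `I` would do and `i` is taken. -/
def sliceUnit (i p : ℍ) : ℍ := if p.im = 0 then i else ‖p.im‖⁻¹ • p.im

def sliceCoord (p : ℍ) : ℂ := ⟨p.re, ‖p.im‖⟩

theorem norm_im_smul_sliceUnit (i p : ℍ) : ‖p.im‖ • sliceUnit i p = p.im := by
  unfold sliceUnit
  split_ifs with h
  · rw [h, norm_zero, zero_smul]
  · rw [smul_smul, mul_inv_cancel₀ (norm_ne_zero_iff.mpr h), one_smul]

theorem isImaginaryUnit_sliceUnit {i : ℍ} (hi : IsImaginaryUnit i) (p : ℍ) :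
    IsImaginaryUnit (sliceUnit i p) := by
  unfold sliceUnit
  split_ifs with h
  · exact hi
  · refine ⟨by simp, ?_⟩
    rw [norm_smul, norm_inv, norm_norm, inv_mul_cancel₀ (norm_ne_zero_iff.mpr h)]

theorem sliceAlgHom_sliceCoord {i : ℍ} (hi : IsImaginaryUnit i) (p : ℍ) :
    (isImaginaryUnit_sliceUnit hi p).sliceAlgHom (sliceCoord p) = p := by
  rw [IsImaginaryUnit.sliceAlgHom_apply]
  exact (congrArg _ (norm_im_smul_sliceUnit i p)).trans (Quaternion.re_add_im p)

theorem norm_sliceCoord (p : ℍ) : ‖sliceCoord p‖ = ‖p‖ := by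
  rw [← sq_eq_sq₀ (norm_nonneg _) (norm_nonneg _), Complex.sq_norm, Complex.normSq_apply,
    Quaternion.norm_sq_eq_re_sq_add_norm_im_sq, sliceCoord, ← sq, ← sq]

theorem norm_sliceCoord_sub_le (p q : ℍ) : ‖sliceCoord p - sliceCoord q‖ ≤ ‖p - q‖ := by
  rw [← pow_le_pow_iff_left₀ (norm_nonneg _) (norm_nonneg _) two_ne_zero, Complex.sq_norm,
    Complex.normSq_apply, Quaternion.norm_sq_eq_re_sq_add_norm_im_sq]
  simp only [sliceCoord, Complex.sub_re, Complex.sub_im, Quaternion.re_sub, Quaternion.im_sub]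
  have him := sq_le_sq' (abs_le.1 (abs_norm_sub_norm_le p.im q.im)).1
    (abs_le.1 (abs_norm_sub_norm_le p.im q.im)).2
  linarith

theorem norm_sliceUnit_sub_mul_le {i : ℍ} (hi : IsImaginaryUnit i) (p q : ℍ) :
    ‖sliceUnit i p - sliceUnit i q‖ * ‖q.im‖ ≤ 2 * ‖p - q‖ := by
  calc ‖sliceUnit i p - sliceUnit i q‖ * ‖q.im‖ ≤ 2 * ‖p.im - q.im‖ :=
        norm_sub_mul_norm_le (isImaginaryUnit_sliceUnit hi p).2
          (norm_im_smul_sliceUnit i p) (norm_im_smul_sliceUnit i q)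
    _ ≤ 2 * ‖p - q‖ := by
        rw [← Quaternion.im_sub]
        gcongr
        exact Quaternion.norm_im_le_norm _

theorem norm_sliceRepr_sub_sliceRepr_le {I J i : ℍ} (hI : ‖I‖ = 1) (hi : ‖i‖ = 1)
    (A B C D : ℍ) :
    ‖sliceRepr I i A B - sliceRepr J i C D‖ ≤
      ‖A - C‖ + ‖B - D‖ + 2⁻¹ * (‖I - J‖ * ‖C - D‖) := by
  have hIi : ‖I * i‖ = 1 := by rw [norm_mul, hI, hi, one_mul]
  have hsplit : sliceRepr I i A B - sliceRepr J i C D = (2⁻¹ : ℝ) •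
      ((1 - I * i) * (A - C) + (1 + I * i) * (B - D) - (I - J) * i * (C - D)) := by
    simp only [sliceRepr, ← smul_sub, mul_sub, sub_mul, add_mul, one_mul]
    congr 1
    abel
  have hone_sub : ‖1 - I * i‖ ≤ 2 := by linarith [norm_sub_le 1 (I * i), norm_one (α := ℍ)]
  have hone_add : ‖1 + I * i‖ ≤ 2 := by linarith [norm_add_le 1 (I * i), norm_one (α := ℍ)]
  rw [hsplit, norm_smul, Real.norm_of_nonneg (by norm_num)]
  calc 2⁻¹ * ‖(1 - I * i) * (A - C) + (1 + I * i) * (B - D) - (I - J) * i * (C - D)‖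
      ≤ 2⁻¹ * (2 * ‖A - C‖ + 2 * ‖B - D‖ + ‖I - J‖ * ‖C - D‖) := by
        gcongr
        refine (norm_sub_le _ _).trans (add_le_add ((norm_add_le _ _).trans
          (add_le_add ?_ ?_)) ?_)
        · exact (norm_mul_le _ _).trans (by gcongr)
        · exact (norm_mul_le _ _).trans (by gcongr)
        · rw [norm_mul, norm_mul, hi, mul_one]
    _ = ‖A - C‖ + ‖B - D‖ + 2⁻¹ * (‖I - J‖ * ‖C - D‖) := by ring

theorem SliceRegularOn.norm_sub_le_of_sliceDisc {f : ℍ → ℍ} {a : ℕ → ℍ}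
    (hfa : SliceRegularOn f a) {i : ℍ} (hi : IsImaginaryUnit i) {ω : ℝ → ℝ} (hω : IsMajorant ω)
    (hslice : ∀ u ∈ sliceDisc i, ∀ v ∈ sliceDisc i, ‖f u - f v‖ ≤ ω ‖u - v‖)
    {p q : ℍ} (hp : p ∈ unitBall) (hq : q ∈ unitBall) :
    ‖f p - f q‖ ≤ 4 * ω ‖p - q‖ := by
  rcases eq_or_ne p q with rfl | hpq
  · simpa using hω.nonneg 0 ⟨le_rfl, zero_le_two⟩
  set d := ‖p - q‖
  have hd : 0 < d := norm_pos_iff.2 (sub_ne_zero.2 hpq)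
  have hd2 : d ≤ 2 := (norm_sub_mem_Icc_zero_two hp hq).2
  have hzp : ‖sliceCoord p‖ < 1 := (norm_sliceCoord p).trans_lt hp
  have hzq : ‖sliceCoord q‖ < 1 := (norm_sliceCoord q).trans_lt hq
  have hzp' : ‖starRingEnd ℂ (sliceCoord p)‖ < 1 := by rwa [Complex.norm_conj]
  have hzq' : ‖starRingEnd ℂ (sliceCoord q)‖ < 1 := by rwa [Complex.norm_conj]
  have hslice' {z w : ℂ} (hz : ‖z‖ < 1) (hw : ‖w‖ < 1) (hzw : ‖z - w‖ ≤ d) :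
      ‖f (hi.sliceAlgHom z) - f (hi.sliceAlgHom w)‖ ≤ ω d := by
    refine (hslice _ (hi.sliceAlgHom_mem_sliceDisc hz) _
      (hi.sliceAlgHom_mem_sliceDisc hw)).trans ?_
    rw [← map_sub, hi.norm_sliceAlgHom]
    exact hω.mono ⟨norm_nonneg _, hzw.trans hd2⟩ ⟨hd.le, hd2⟩ hzw
  have hAC := hslice' hzp hzq (norm_sliceCoord_sub_le p q)
  have hBD := hslice' hzp' hzq' (by
    rw [← map_sub, Complex.norm_conj]; exact norm_sliceCoord_sub_le p q)
  have hCD : ‖sliceUnit i p - sliceUnit i q‖ *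
      ‖f (hi.sliceAlgHom (sliceCoord q)) - f (hi.sliceAlgHom (starRingEnd ℂ (sliceCoord q)))‖ ≤
      4 * ω d := by
    have hy : |(sliceCoord q).im| = ‖q.im‖ := abs_of_nonneg (norm_nonneg _)
    refine (mul_le_mul_of_nonneg_left (hslice _ (hi.sliceAlgHom_mem_sliceDisc hzq) _
      (hi.sliceAlgHom_mem_sliceDisc hzq')) (norm_nonneg _)).trans ?_
    rw [hi.norm_sliceAlgHom_sub_conj, hy]
    refine hω.mul_le_mul_of_mul_le (norm_nonneg _) ?_ (by positivity) ?_ hd hd2 ?_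
    · have hp1 := (isImaginaryUnit_sliceUnit hi p).2
      have hq1 := (isImaginaryUnit_sliceUnit hi q).2
      linarith [norm_sub_le (sliceUnit i p) (sliceUnit i q)]
    · have hq' : ‖q‖ < 1 := hq
      linarith [Quaternion.norm_im_le_norm q]
    · linarith [norm_sliceUnit_sub_mul_le hi p q]
  rw [← sliceAlgHom_sliceCoord hi p, ← sliceAlgHom_sliceCoord hi q,
    hfa.apply_sliceAlgHom _ hi hzp, hfa.apply_sliceAlgHom _ hi hzq]
  refine (norm_sliceRepr_sub_sliceRepr_le (isImaginaryUnit_sliceUnit hi p).2 hi.2 _ _ _ _).trans ?_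
  linarith

theorem comp1_add_comp2_mul (i : ℍ) {j : ℍ} (hj : j ≠ 0) (f : ℍ → ℍ) (q : ℍ) :
    comp1 i f q + comp2 i j f q * j = f q := by
  rw [comp1, comp2, mul_assoc _ j⁻¹ j, inv_mul_cancel₀ hj, mul_one, ← smul_add, sub_add_add_cancel,
    ← two_smul ℝ, smul_smul, inv_mul_cancel₀ two_ne_zero, one_smul]

theorem norm_sub_le_norm_comp1_sub_add_norm_comp2_sub (i : ℍ) {j : ℍ} (hj : ‖j‖ = 1)
    (f : ℍ → ℍ) (u v : ℍ) :
    ‖f u - f v‖ ≤ ‖comp1 i f u - comp1 i f v‖ + ‖comp2 i j f u - comp2 i j f v‖ := by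
  have hj0 : j ≠ 0 := norm_ne_zero_iff.1 (hj ▸ one_ne_zero)
  rw [← comp1_add_comp2_mul i hj0 f u, ← comp1_add_comp2_mul i hj0 f v, add_sub_add_comm,
    ← sub_mul]
  exact (norm_add_le _ _).trans_eq (by rw [norm_mul, hj, mul_one])

theorem stmt0_general (ω₁ ω₂ : ℝ → ℝ) (hω₁ : IsMajorant ω₁) (hω₂ : IsMajorant ω₂)
    (i j : ℍ) (hij : OrthogonalUnits i j)
    (f : ℍ → ℍ) (hf : IsSliceRegular f)
    (C₁ C₂ : ℝ) (hC₁ : 0 < C₁)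
    (h1 : ∀ x ∈ sliceDisc i, ∀ y ∈ sliceDisc i,
      ‖comp1 i f x - comp1 i f y‖ ≤ C₁ * ω₁ ‖x - y‖)
    (h2 : ∀ x ∈ sliceDisc i, ∀ y ∈ sliceDisc i,
      ‖comp2 i j f x - comp2 i j f y‖ ≤ C₂ * ω₂ ‖x - y‖) :
    ∀ p ∈ unitBall, ∀ q ∈ unitBall,
      ‖f p - f q‖ ≤ 6 * max C₁ C₂ * (ω₁ ‖p - q‖ + ω₂ ‖p - q‖) := by
  obtain ⟨a, hfa⟩ := hf
  obtain ⟨hi, hj, -⟩ := hij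
  intro p hp q hq
  set M := max C₁ C₂
  have hM : 0 ≤ M := hC₁.le.trans (le_max_left _ _)
  have hω : IsMajorant (fun t => M * (ω₁ t + ω₂ t)) := (hω₁.add hω₂).const_mul hM
  have hslice : ∀ u ∈ sliceDisc i, ∀ v ∈ sliceDisc i,
      ‖f u - f v‖ ≤ M * (ω₁ ‖u - v‖ + ω₂ ‖u - v‖) := by
    intro u hu v hv
    have hd := norm_sub_mem_Icc_zero_two (sliceDisc_subset_unitBall i hu)
      (sliceDisc_subset_unitBall i hv)
    calc ‖f u - f v‖ ≤ C₁ * ω₁ ‖u - v‖ + C₂ * ω₂ ‖u - v‖ :=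
          (norm_sub_le_norm_comp1_sub_add_norm_comp2_sub i hj.2 f u v).trans
            (add_le_add (h1 u hu v hv) (h2 u hu v hv))
      _ ≤ M * (ω₁ ‖u - v‖ + ω₂ ‖u - v‖) := by
          rw [mul_add]
          gcongr
          exacts [hω₁.nonneg _ hd, le_max_left _ _, hω₂.nonneg _ hd, le_max_right _ _]
  calc ‖f p - f q‖ ≤ 4 * (M * (ω₁ ‖p - q‖ + ω₂ ‖p - q‖)) :=
        hfa.norm_sub_le_of_sliceDisc hi hω hslice hp hq
    _ ≤ 6 * M * (ω₁ ‖p - q‖ + ω₂ ‖p - q‖) := by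
        nlinarith [hω.nonneg _ (norm_sub_mem_Icc_zero_two hp hq)]

theorem stmt0 (ω₁ ω₂ : ℝ → ℝ) (hω₁ : IsMajorant ω₁) (hω₂ : IsMajorant ω₂)
    (i j : ℍ) (hij : OrthogonalUnits i j)
    (f : ℍ → ℍ) (hf : IsSliceRegular f)
    (C₁ C₂ : ℝ) (hC₁ : 0 < C₁) (hC₂ : 0 < C₂)
    (h1 : ∀ x ∈ sliceDisc i, ∀ y ∈ sliceDisc i,
      ‖comp1 i f x - comp1 i f y‖ ≤ C₁ * ω₁ ‖x - y‖)
    (h2 : ∀ x ∈ sliceDisc i, ∀ y ∈ sliceDisc i,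
      ‖comp2 i j f x - comp2 i j f y‖ ≤ C₂ * ω₂ ‖x - y‖) :
    ∀ p ∈ unitBall, ∀ q ∈ unitBall,
      ‖f p - f q‖ ≤ 6 * max C₁ C₂ * (ω₁ ‖p - q‖ + ω₂ ‖p - q‖) :=
  stmt0_general ω₁ ω₂ hω₁ hω₂ i j hij f hf C₁ C₂ hC₁ h1 h2
end
end

section
/- Let i, j be imaginary units and let f : ℍ → ℍ be continuous on the closed unit ball of ℍ. Then for every x ∈ D_i: (1/(2π))·∫₀^{2π} ‖(1/2)·[(1 + j·i)·(x − e^{−it})⁻²·f(e^{−it}) + (1 − j·i)·(x − e^{it})⁻²·f(e^{it})]‖·(1 − ‖x‖²) dt ≤ 2·P_i[z ↦ ‖f(z)‖](x). (For slice regular f, the integrand equals ‖(x − e^{jt})^{−*2} * f(e^{jt})‖·(1 − ‖x‖²), so this is the bound (1/(2π))·∫₀^{2π} ‖(x − e^{jt})^{−*2} * f(e^{jt})‖·(1 − ‖x‖²) dt ≤ 2·P_i[‖f‖](x).) -/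
noncomputable section

open Real MeasureTheory

/-!
Since `‖j i‖ = 1`, both coefficients `1 ± j i` have norm at most `2`, so the integrand at `t` is
bounded by `g (-t) + g t`, where `g` is the integrand of the Poisson integral of `‖f‖` at `x`.
As `g` is `2π`-periodic, `t ↦ g (-t)` has the same integral over a period as `g`, and the two
halves together give twice the Poisson integral.
-/

theorem normSq_expI {i : ℍ} (hi : IsImaginaryUnit i) (t : ℝ) :
    Quaternion.normSq (expI i t) = 1 := by
  have hnormSq_i : Quaternion.normSq i = 1 := by
    rw [Quaternion.normSq_eq_norm_mul_self, hi.2, one_mul]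
  rw [expI, Quaternion.normSq_add, Quaternion.normSq_smul, hnormSq_i, Quaternion.normSq_coe,
    Quaternion.coe_mul_eq_smul]
  simp only [Quaternion.re_smul, Quaternion.star_smul, Quaternion.re_star, hi.1, smul_zero,
    mul_zero, add_zero, mul_one]
  linarith [sin_sq_add_cos_sq t]

theorem norm_expI {i : ℍ} (hi : IsImaginaryUnit i) (t : ℝ) : ‖expI i t‖ = 1 := by
  have h := Quaternion.normSq_eq_norm_mul_self (expI i t)
  rw [normSq_expI hi] at h
  nlinarith [norm_nonneg (expI i t)]

theorem expI_periodic (i : ℍ) : Function.Periodic (expI i) (2 * π) := fun t => by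
  simp [expI, cos_add_two_pi, sin_add_two_pi]

theorem continuous_expI (i : ℍ) : Continuous (expI i) := by
  have := Quaternion.continuous_coe
  unfold expI; fun_prop

theorem sub_expI_ne_zero {i x : ℍ} (hi : IsImaginaryUnit i) (hx : ‖x‖ < 1) (t : ℝ) :
    x - expI i t ≠ 0 := by
  rw [sub_ne_zero]
  rintro rfl
  exact hx.ne (norm_expI hi t)

theorem continuous_comp_expI {i : ℍ} (hi : IsImaginaryUnit i) {f : ℍ → ℍ}
    (hf : ContinuousOn f (Metric.closedBall 0 1)) : Continuous fun t => f (expI i t) :=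
  hf.comp_continuous (continuous_expI i) fun t => by simp [norm_expI hi t]

def poissonIntegrand (i : ℍ) (u : ℍ → ℝ) (x : ℍ) (t : ℝ) : ℝ :=
  u (expI i t) * (1 - ‖x‖ ^ 2) / ‖x - expI i t‖ ^ 2

theorem poisson_eq_integral_poissonIntegrand (i : ℍ) (u : ℍ → ℝ) (x : ℍ) :
    poisson i u x = 1 / (2 * π) * ∫ t in (0 : ℝ)..(2 * π), poissonIntegrand i u x t :=
  rfl

theorem poissonIntegrand_periodic (i : ℍ) (u : ℍ → ℝ) (x : ℍ) :
    Function.Periodic (poissonIntegrand i u x) (2 * π) := fun t => by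
  simp only [poissonIntegrand, expI_periodic i t]

theorem continuous_poissonIntegrand {i x : ℍ} (hi : IsImaginaryUnit i) (hx : ‖x‖ < 1)
    {u : ℍ → ℝ} (hu : Continuous fun t => u (expI i t)) :
    Continuous (poissonIntegrand i u x) :=
  (hu.mul continuous_const).div ((continuous_const.sub (continuous_expI i)).norm.pow 2)
    fun t => pow_ne_zero 2 (norm_ne_zero_iff.2 (sub_expI_ne_zero hi hx t))

theorem Function.Periodic.intervalIntegral_comp_neg {E : Type*} [NormedAddCommGroup E]
    [NormedSpace ℝ E] {g : ℝ → E} {T : ℝ} (hg : Function.Periodic g T) :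
    ∫ t in (0 : ℝ)..T, g (-t) = ∫ t in (0 : ℝ)..T, g t := by
  rw [intervalIntegral.integral_comp_neg, neg_zero]
  simpa using hg.intervalIntegral_add_eq (-T) 0

theorem norm_half_smul_add_le {D : Type*} [NormedDivisionRing D] [NormedAlgebra ℝ D] {u : D}
    (hu : ‖u‖ ≤ 1) (y z a b : D) :
    ‖(2⁻¹ : ℝ) • ((1 + u) * y⁻¹ ^ 2 * a + (1 - u) * z⁻¹ ^ 2 * b)‖ ≤
      ‖a‖ / ‖y‖ ^ 2 + ‖b‖ / ‖z‖ ^ 2 := by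
  have hplus : ‖1 + u‖ ≤ 2 := (norm_add_le _ _).trans (by rw [norm_one]; linarith)
  have hminus : ‖1 - u‖ ≤ 2 := (norm_sub_le _ _).trans (by rw [norm_one]; linarith)
  calc ‖(2⁻¹ : ℝ) • ((1 + u) * y⁻¹ ^ 2 * a + (1 - u) * z⁻¹ ^ 2 * b)‖
      ≤ 2⁻¹ * (‖1 + u‖ * (‖a‖ / ‖y‖ ^ 2) + ‖1 - u‖ * (‖b‖ / ‖z‖ ^ 2)) := by
        rw [norm_smul, Real.norm_of_nonneg (by norm_num)]
        gcongr
        refine (norm_add_le _ _).trans_eq ?_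
        simp only [norm_mul, norm_pow, norm_inv]
        ring
    _ ≤ 2⁻¹ * (2 * (‖a‖ / ‖y‖ ^ 2) + 2 * (‖b‖ / ‖z‖ ^ 2)) := by gcongr
    _ = ‖a‖ / ‖y‖ ^ 2 + ‖b‖ / ‖z‖ ^ 2 := by ring

theorem stmt17 (i j : ℍ) (hi : IsImaginaryUnit i) (hj : IsImaginaryUnit j) (f : ℍ → ℍ)
    (hcont : ContinuousOn f (Metric.closedBall 0 1)) :
    ∀ x ∈ sliceDisc i,
      (1 / (2 * Real.pi)) * (∫ t in (0:ℝ)..(2 * Real.pi),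
          ‖(2⁻¹ : ℝ) • ((1 + j * i) * ((x - expI i (-t))⁻¹ ^ 2) * f (expI i (-t)) +
              (1 - j * i) * ((x - expI i t)⁻¹ ^ 2) * f (expI i t))‖ * (1 - ‖x‖ ^ 2)) ≤
        2 * poisson i (fun z => ‖f z‖) x := by
  rintro x ⟨-, hx⟩
  have h1x : 0 ≤ 1 - ‖x‖ ^ 2 := by nlinarith [norm_nonneg x]
  have hji : ‖j * i‖ ≤ 1 := by rw [norm_mul, hi.2, hj.2, one_mul]
  set g := poissonIntegrand i (fun z => ‖f z‖) x
  have hg : Continuous g := continuous_poissonIntegrand hi hx (continuous_comp_expI hi hcont).norm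
  have hg_neg : Continuous fun t => g (-t) := hg.comp continuous_neg
  have hbound : ∀ t : ℝ,
      ‖(2⁻¹ : ℝ) • ((1 + j * i) * ((x - expI i (-t))⁻¹ ^ 2) * f (expI i (-t)) +
        (1 - j * i) * ((x - expI i t)⁻¹ ^ 2) * f (expI i t))‖ * (1 - ‖x‖ ^ 2) ≤ g (-t) + g t :=
    fun t => (mul_le_mul_of_nonneg_right (norm_half_smul_add_le hji _ _ _ _) h1x).trans_eq
      (by simp only [g, poissonIntegrand]; ring)
  -- The left integrand need not be shown integrable: if it is not, its integral is `0`.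
  calc _ ≤ 1 / (2 * π) * ∫ t in (0 : ℝ)..(2 * π), (g (-t) + g t) := by
        gcongr
        rw [intervalIntegral.integral_of_le (by positivity),
          intervalIntegral.integral_of_le (by positivity)]
        exact integral_mono_of_nonneg (ae_of_all _ fun t => by positivity)
          ((hg_neg.add hg).integrableOn_Ioc) (ae_of_all _ hbound)
    _ = 2 * poisson i (fun z => ‖f z‖) x := by
        rw [intervalIntegral.integral_add (hg_neg.intervalIntegrable _ _)
          (hg.intervalIntegrable _ _), (poissonIntegrand_periodic _ _ _).intervalIntegral_comp_neg,
          poisson_eq_integral_poissonIntegrand]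
        ring
end
end
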